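/- Let f ∈ Diff¹_ω(D). If there exists a sequence (q_k) of positive integers such that d₁(f^{q_k}, id) → 0 as k → ∞ (the iterates f^{q_k} converge to the identity in the C¹ topology), then Cal₁(f) = 0. -/

import Mathlib

open MeasureTheory Metric Set Filter Topology
open scoped Real

noncomputable section

/-- The closed unit disk in `ℂ ≅ ℝ²`. -/
def Disk : Set ℂ := Metric.closedBall 0 1

/-- The unit circle, boundary of the closed unit disk. -/
def Circ : Set ℂ := Metric.sphere 0 1

/-- The standard Liouville form `λ_z(w) = (z₁ w₂ - z₂ w₁)/(2π)`, whose exterior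
derivative is the normalized area form `ω = (1/π) du ∧ dv`. -/
def lform (z w : ℂ) : ℝ := (z.re * w.im - z.im * w.re) / (2 * Real.pi)

/-- An element of `Diff¹_ω(D)`: a `C¹` diffeomorphism of the closed unit disk onto itself
whose Jacobian determinant equals `1` at every point. -/
structure SympDiff where
  toFun : ℂ → ℂ
  invFun : ℂ → ℂ
  mapsTo : Set.MapsTo toFun Disk Disk
  inv_mapsTo : Set.MapsTo invFun Disk Disk
  left_inv : ∀ z ∈ Disk, invFun (toFun z) = z
  right_inv : ∀ z ∈ Disk, toFun (invFun z) = z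
  contDiffOn : ContDiffOn ℝ 1 toFun Disk
  inv_contDiffOn : ContDiffOn ℝ 1 invFun Disk
  jacobian : ∀ z ∈ Disk,
    LinearMap.det (fderivWithin ℝ toFun Disk z).toLinearMap = 1

/-- `A` is an action function of `f`: a `C¹` function with `dA = f*λ - λ` on the disk. -/
def IsAction (f : SympDiff) (A : ℂ → ℝ) : Prop :=
  ContDiffOn ℝ 1 A Disk ∧
    ∀ z ∈ Disk, ∀ w : ℂ,
      fderivWithin ℝ A Disk z w =
        lform (f.toFun z) (fderivWithin ℝ f.toFun Disk z w) - lform z w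

/-- `μ` is a Borel probability measure concentrated on the unit circle and invariant
under `f|_{S¹}`. -/
def IsInvariantCircleMeasure (f : SympDiff) (μ : Measure ℂ) : Prop :=
  IsProbabilityMeasure μ ∧ μ Circᶜ = 0 ∧ Measure.map f.toFun μ = μ

/-- `A` is a normalized action function of `f`: an action function whose integral over the
circle with respect to some `f|_{S¹}`-invariant probability measure vanishes. -/
def IsNormalizedAction (f : SympDiff) (A : ℂ → ℝ) : Prop :=
  IsAction f A ∧
    ∃ μ : Measure ℂ, IsInvariantCircleMeasure f μ ∧ ∫ z, A z ∂μ = 0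

/-- The `C⁰` distance between two disk diffeomorphisms (given with their inverses). -/
def d0 (f fi g gi : ℂ → ℂ) : ℝ :=
  max (⨆ z : Disk, ‖f (z : ℂ) - g (z : ℂ)‖) (⨆ z : Disk, ‖fi (z : ℂ) - gi (z : ℂ)‖)

/-- The `C¹` distance between two disk diffeomorphisms (given with their inverses). -/
def d1 (f fi g gi : ℂ → ℂ) : ℝ :=
  max (d0 f fi g gi)
    (max (⨆ z : Disk, ‖fderivWithin ℝ f Disk (z : ℂ) - fderivWithin ℝ g Disk (z : ℂ)‖)
      (⨆ z : Disk, ‖fderivWithin ℝ fi Disk (z : ℂ) - fderivWithin ℝ gi Disk (z : ℂ)‖))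

/-! If `A` is an action function of `f`, the cocycle property makes the Birkhoff sum
`Aₙ = ∑_{i<n} A ∘ fⁱ` an action function of `fⁿ`. Its differential `(fⁿ)*λ - λ` is of size
`O(d₁(fⁿ, id))`, so the oscillation of `Aₙ` on the disk is too; as `∫ Aₙ dμ = 0` for the
invariant measure `μ` on the circle, `Aₙ` itself is `O(d₁(fⁿ, id))`. Since `f` preserves area,
`∫_D Aₙ = n ∫_D A`, so `n |∫_D A| = O(d₁(fⁿ, id))`; along `n = q_k` the right side tends to `0`. -/

lemma isCompact_disk : IsCompact Disk := isCompact_closedBall 0 1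

lemma convex_disk : Convex ℝ Disk := convex_closedBall 0 1

lemma uniqueDiffOn_disk : UniqueDiffOn ℝ Disk :=
  uniqueDiffOn_convex convex_disk (by simp [Disk, interior_closedBall (0 : ℂ) one_ne_zero])

lemma norm_le_one_of_mem_disk {z : ℂ} (hz : z ∈ Disk) : ‖z‖ ≤ 1 :=
  mem_closedBall_zero_iff.1 hz

lemma norm_sub_le_two_of_mem_disk {z w : ℂ} (hz : z ∈ Disk) (hw : w ∈ Disk) : ‖z - w‖ ≤ 2 :=
  (norm_sub_le z w).trans (by linarith [norm_le_one_of_mem_disk hz, norm_le_one_of_mem_disk hw])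

def liouville (z : ℂ) : ℂ →L[ℝ] ℝ :=
  (2 * π)⁻¹ • (z.re • Complex.imCLM - z.im • Complex.reCLM)

@[simp]
lemma liouville_apply (z w : ℂ) : liouville z w = lform z w := by
  simp [liouville, lform, div_eq_inv_mul]

lemma liouville_sub (u z : ℂ) : liouville (u - z) = liouville u - liouville z := by
  ext w
  simp only [liouville_apply, sub_apply, lform, Complex.sub_re, Complex.sub_im]
  ring

lemma norm_liouville_le (z : ℂ) : ‖liouville z‖ ≤ ‖z‖ / π := by
  refine ContinuousLinearMap.opNorm_le_bound _ (by positivity) fun w => ?_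
  have hcross : |z.re * w.im - z.im * w.re| ≤ 2 * (‖z‖ * ‖w‖) := by
    have h1 := mul_le_mul (Complex.abs_re_le_norm z) (Complex.abs_im_le_norm w)
      (abs_nonneg _) (norm_nonneg _)
    have h2 := mul_le_mul (Complex.abs_im_le_norm z) (Complex.abs_re_le_norm w)
      (abs_nonneg _) (norm_nonneg _)
    rw [← abs_mul] at h1 h2
    linarith [abs_sub (z.re * w.im) (z.im * w.re)]
  rw [liouville_apply, lform, Real.norm_eq_abs, abs_div, abs_of_pos Real.two_pi_pos,
    div_le_iff₀ Real.two_pi_pos]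
  calc _ ≤ 2 * (‖z‖ * ‖w‖) := hcross
    _ = ‖z‖ / π * ‖w‖ * (2 * π) := by field_simp

lemma norm_liouville_comp_sub_liouville_le {u : ℂ} (hu : ‖u‖ ≤ 1) (z : ℂ) (L : ℂ →L[ℝ] ℂ) :
    ‖(liouville u).comp L - liouville z‖ ≤
      (‖L - ContinuousLinearMap.id ℝ ℂ‖ + ‖u - z‖) / π := by
  have hsplit : (liouville u).comp L - liouville z
      = (liouville u).comp (L - ContinuousLinearMap.id ℝ ℂ) + liouville (u - z) := by
    rw [ContinuousLinearMap.comp_sub, ContinuousLinearMap.comp_id, liouville_sub]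
    abel
  have hu' : ‖liouville u‖ ≤ 1 / π :=
    (norm_liouville_le u).trans (div_le_div_of_nonneg_right hu Real.pi_pos.le)
  calc _ ≤ ‖liouville u‖ * ‖L - ContinuousLinearMap.id ℝ ℂ‖ + ‖u - z‖ / π := by
        rw [hsplit]
        exact (norm_add_le _ _).trans
          (add_le_add (ContinuousLinearMap.opNorm_comp_le _ _) (norm_liouville_le _))
    _ ≤ 1 / π * ‖L - ContinuousLinearMap.id ℝ ℂ‖ + ‖u - z‖ / π := by gcongr
    _ = _ := by ring

def IsActionOn (s : Set ℂ) (g : ℂ → ℂ) (A : ℂ → ℝ) : Prop :=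
  ∀ z ∈ s,
    HasFDerivWithinAt A ((liouville (g z)).comp (fderivWithin ℝ g s z) - liouville z) s z

lemma IsAction.isActionOn {f : SympDiff} {A : ℂ → ℝ} (hA : IsAction f A) :
    IsActionOn Disk f.toFun A := by
  intro z hz
  refine ((hA.1.differentiableOn one_ne_zero) z hz).hasFDerivWithinAt.congr_fderiv ?_
  ext w
  simp [hA.2 z hz w]

lemma isActionOn_id {s : Set ℂ} (hs : UniqueDiffOn ℝ s) : IsActionOn s id 0 := by
  intro z hz
  rw [fderivWithin_id (hs z hz), ContinuousLinearMap.comp_id, id, sub_self]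
  exact hasFDerivWithinAt_const 0 z s

namespace IsActionOn

variable {s : Set ℂ} {g h : ℂ → ℂ} {A B : ℂ → ℝ}

lemma continuousOn (hA : IsActionOn s g A) : ContinuousOn A s :=
  fun z hz => (hA z hz).continuousWithinAt

lemma comp (hs : UniqueDiffOn ℝ s) (hgs : MapsTo g s s) (hg : DifferentiableOn ℝ g s)
    (hh : DifferentiableOn ℝ h s) (hA : IsActionOn s g A) (hB : IsActionOn s h B) :
    IsActionOn s (h ∘ g) (fun z => A z + B (g z)) := by
  intro z hz
  refine ((hA z hz).add
    ((hB (g z) (hgs hz)).comp z (hg z hz).hasFDerivWithinAt hgs)).congr_fderiv ?_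
  rw [fderivWithin_comp z (hh (g z) (hgs hz)) (hg z hz) hgs (hs z hz)]
  ext w
  simp only [Function.comp_apply, add_apply, sub_apply, ContinuousLinearMap.comp_apply]
  ring

lemma iterate (hs : UniqueDiffOn ℝ s) (hgs : MapsTo g s s) (hg : DifferentiableOn ℝ g s)
    (hA : IsActionOn s g A) (n : ℕ) : IsActionOn s g^[n] (birkhoffSum g A n) := by
  induction n with
  | zero => simpa [birkhoffSum_zero'] using isActionOn_id hs
  | succ n ih =>
    have hsum : birkhoffSum g A (n + 1) = fun z => A z + birkhoffSum g A n (g z) :=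
      funext (birkhoffSum_succ' g A n)
    rw [hsum, Function.iterate_succ]
    exact hA.comp hs hgs hg (hg.iterate hgs n) ih

lemma abs_sub_le_of_near_id {ε : ℝ} (hA : IsActionOn Disk g A) (hgD : MapsTo g Disk Disk)
    (h0 : ∀ z ∈ Disk, ‖g z - z‖ ≤ ε)
    (h1 : ∀ z ∈ Disk, ‖fderivWithin ℝ g Disk z - ContinuousLinearMap.id ℝ ℂ‖ ≤ ε)
    {z w : ℂ} (hz : z ∈ Disk) (hw : w ∈ Disk) : |A z - A w| ≤ 4 * ε / π := by
  have hderiv : ∀ x ∈ Disk,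
      ‖(liouville (g x)).comp (fderivWithin ℝ g Disk x) - liouville x‖ ≤ 2 * ε / π := by
    intro x hx
    refine (norm_liouville_comp_sub_liouville_le (norm_le_one_of_mem_disk (hgD hx)) _ _).trans ?_
    rw [two_mul]
    gcongr
    exacts [h1 x hx, h0 x hx]
  have hε : 0 ≤ ε := (norm_nonneg _).trans (h0 z hz)
  calc |A z - A w| ≤ 2 * ε / π * ‖z - w‖ :=
        convex_disk.norm_image_sub_le_of_norm_hasFDerivWithin_le hA hderiv hw hz
    _ ≤ 2 * ε / π * 2 := by gcongr; exact norm_sub_le_two_of_mem_disk hz hw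
    _ = 4 * ε / π := by ring

end IsActionOn

section

variable {α E : Type*} [MeasurableSpace α] [NormedAddCommGroup E] [NormedSpace ℝ E]
  {μ : Measure α}

lemma MeasureTheory.Measure.map_iterate_of_map_eq [NeZero μ] {f : α → α} (hf : μ.map f = μ)
    (n : ℕ) : μ.map f^[n] = μ := by
  induction n with
  | zero => exact Measure.map_id
  | succ n ih =>
    -- `map` of a non-a.e.-measurable function is `0`, so `μ.map _ = μ ≠ 0` gives measurability
    have hfn : AEMeasurable f^[n] μ := .of_map_ne_zero (by rw [ih]; exact NeZero.ne μ)
    have hf' : AEMeasurable f (μ.map f^[n]) := by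
      rw [ih]; exact .of_map_ne_zero (by rw [hf]; exact NeZero.ne μ)
    rw [Function.iterate_succ', ← AEMeasurable.map_map_of_aemeasurable hf' hfn, ih, hf]

lemma integral_birkhoffSum_eq_nsmul {f : α → α} {A : α → E}
    (hint : ∀ n, Integrable (fun x => A (f^[n] x)) μ)
    (hinv : ∀ n, ∫ x, A (f^[n] x) ∂μ = ∫ x, A x ∂μ) (n : ℕ) :
    ∫ x, birkhoffSum f A n x ∂μ = n • ∫ x, A x ∂μ := by
  simp only [birkhoffSum]
  rw [integral_finsetSum _ fun i _ => hint i, Finset.sum_congr rfl fun i _ => hinv i,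
    Finset.sum_const, Finset.card_range]

lemma abs_le_of_integral_eq_zero [IsProbabilityMeasure μ] {s : Set α} {B : α → ℝ} {M : ℝ}
    (hs : ∀ᵐ x ∂μ, x ∈ s) (hB : Integrable B μ) (h0 : ∫ x, B x ∂μ = 0)
    (hosc : ∀ z ∈ s, ∀ w ∈ s, |B z - B w| ≤ M) {z : α} (hz : z ∈ s) : |B z| ≤ M := by
  have hBz : B z = ∫ w, (B z - B w) ∂μ := by
    rw [integral_sub (integrable_const _) hB, h0, integral_const]
    simp
  rw [hBz, ← Real.norm_eq_abs, ← mul_one M, ← probReal_univ (μ := μ)]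
  exact norm_integral_le_of_norm_le_const
    (by filter_upwards [hs] with w hw using (Real.norm_eq_abs _).trans_le (hosc z hz w hw))

end

lemma setIntegral_comp_iterate_of_det_eq_one {E F : Type*} [NormedAddCommGroup E]
    [NormedSpace ℝ E] [FiniteDimensional ℝ E] [MeasurableSpace E] [BorelSpace E]
    [NormedAddCommGroup F] [NormedSpace ℝ F] (μ : Measure E) [μ.IsAddHaarMeasure]
    {s : Set E} {g : E → E} {g' : E → E →L[ℝ] E} (hs : MeasurableSet s)
    (hg' : ∀ x ∈ s, HasFDerivWithinAt g (g' x) s x) (hdet : ∀ x ∈ s, (g' x).det = 1)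
    (hbij : BijOn g s s) (A : E → F) (n : ℕ) :
    ∫ x in s, A (g^[n] x) ∂μ = ∫ x in s, A x ∂μ := by
  induction n with
  | zero => rfl
  | succ n ih =>
    have hcov := integral_image_eq_integral_abs_det_fderiv_smul μ hs hg' hbij.injOn
      (fun x => A (g^[n] x))
    rw [hbij.image_eq, ih] at hcov
    rw [hcov]
    refine setIntegral_congr_fun hs fun x hx => ?_
    simp [hdet x hx, Function.iterate_succ_apply]

lemma ContDiffOn.iterate {𝕜 E : Type*} [NontriviallyNormedField 𝕜] [NormedAddCommGroup E]
    [NormedSpace 𝕜 E] {n : WithTop ℕ∞} {f : E → E} {s : Set E} (hf : ContDiffOn 𝕜 n f s)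
    (hs : MapsTo f s s) (k : ℕ) : ContDiffOn 𝕜 n f^[k] s :=
  Nat.recOn k contDiffOn_id fun _ ih => ih.comp hf hs

lemma le_iSup_disk {F : ℂ → ℝ} (hF : ContinuousOn F Disk) {z : ℂ} (hz : z ∈ Disk) :
    F z ≤ ⨆ w : Disk, F w := by
  refine le_ciSup (f := fun w : Disk => F w) ?_ ⟨z, hz⟩
  rw [← Set.image_eq_range]
  exact (isCompact_disk.image_of_continuousOn hF).bddAbove

lemma norm_sub_le_d1 {g gi : ℂ → ℂ} (hg : ContinuousOn g Disk) {z : ℂ} (hz : z ∈ Disk) :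
    ‖g z - z‖ ≤ d1 g gi id id :=
  (le_iSup_disk (F := fun w => ‖g w - id w‖) ((hg.sub continuousOn_id).norm) hz).trans
    ((le_max_left _ _).trans (le_max_left _ _))

lemma norm_fderivWithin_sub_id_le_d1 {g gi : ℂ → ℂ} (hg : ContDiffOn ℝ 1 g Disk) {z : ℂ}
    (hz : z ∈ Disk) :
    ‖fderivWithin ℝ g Disk z - ContinuousLinearMap.id ℝ ℂ‖ ≤ d1 g gi id id := by
  have hid : ∀ w ∈ Disk, fderivWithin ℝ id Disk w = ContinuousLinearMap.id ℝ ℂ :=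
    fun w hw => fderivWithin_id (uniqueDiffOn_disk w hw)
  have hcont :
      ContinuousOn (fun w => ‖fderivWithin ℝ g Disk w - fderivWithin ℝ id Disk w‖) Disk :=
    ((hg.continuousOn_fderivWithin uniqueDiffOn_disk le_rfl).sub
      (continuousOn_const.congr fun w hw => hid w hw)).norm
  rw [← hid z hz]
  exact (le_iSup_disk hcont hz).trans ((le_max_left _ _).trans (le_max_right _ _))

namespace SympDiff

variable (f : SympDiff)

lemma bijOn : BijOn f.toFun Disk Disk :=
  InvOn.bijOn ⟨f.left_inv, f.right_inv⟩ f.mapsTo f.inv_mapsTo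

lemma differentiableOn : DifferentiableOn ℝ f.toFun Disk :=
  f.contDiffOn.differentiableOn one_ne_zero

lemma continuousOn_comp_iterate {A : ℂ → ℝ} (hA : ContinuousOn A Disk) (n : ℕ) :
    ContinuousOn (fun z => A (f.toFun^[n] z)) Disk :=
  hA.comp (f.differentiableOn.iterate f.mapsTo n).continuousOn (f.mapsTo.iterate n)

lemma setIntegral_birkhoffSum {A : ℂ → ℝ} (hA : ContinuousOn A Disk) (n : ℕ) :
    ∫ z in Disk, birkhoffSum f.toFun A n z = n • ∫ z in Disk, A z :=
  integral_birkhoffSum_eq_nsmul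
    (fun k => (f.continuousOn_comp_iterate hA k).integrableOn_compact isCompact_disk)
    (setIntegral_comp_iterate_of_det_eq_one volume measurableSet_closedBall
      (fun z hz => (f.differentiableOn z hz).hasFDerivWithinAt) f.jacobian f.bijOn A) n

end SympDiff

namespace IsInvariantCircleMeasure

variable {f : SympDiff} {μ : Measure ℂ}

lemma ae_mem_disk (hμ : IsInvariantCircleMeasure f μ) : ∀ᵐ z ∂μ, z ∈ Disk :=
  measure_mono_null (compl_subset_compl.2 sphere_subset_closedBall) hμ.2.1

lemma integrable_of_continuousOn (hμ : IsInvariantCircleMeasure f μ) {A : ℂ → ℝ}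
    (hA : ContinuousOn A Disk) : Integrable A μ := by
  have : IsProbabilityMeasure μ := hμ.1
  rw [← Measure.restrict_eq_self_of_ae_mem hμ.ae_mem_disk]
  exact hA.integrableOn_compact isCompact_disk

lemma integral_birkhoffSum (hμ : IsInvariantCircleMeasure f μ) {A : ℂ → ℝ}
    (hA : ContinuousOn A Disk) (n : ℕ) :
    ∫ z, birkhoffSum f.toFun A n z ∂μ = n • ∫ z, A z ∂μ := by
  have : IsProbabilityMeasure μ := hμ.1
  have hmap := Measure.map_iterate_of_map_eq hμ.2.2
  refine integral_birkhoffSum_eq_nsmul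
    (fun k => hμ.integrable_of_continuousOn (f.continuousOn_comp_iterate hA k)) (fun k => ?_) n
  have hAμ := hμ.integrable_of_continuousOn hA
  rw [← integral_map (AEMeasurable.of_map_ne_zero (by rw [hmap k]; exact NeZero.ne μ))
    (by rw [hmap k]; exact hAμ.aestronglyMeasurable), hmap k]

end IsInvariantCircleMeasure

lemma IsNormalizedAction.natCast_mul_abs_setIntegral_le {f : SympDiff} {A : ℂ → ℝ}
    (hA : IsNormalizedAction f A) (n : ℕ) :
    n * |∫ z in Disk, A z| ≤
      4 * volume.real Disk / π * d1 (f.toFun^[n]) (f.invFun^[n]) id id := by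
  obtain ⟨hAct, μ, hμ, hμA⟩ := hA
  set ε := d1 (f.toFun^[n]) (f.invFun^[n]) id id
  set B := birkhoffSum f.toFun A n
  have hB : IsActionOn Disk f.toFun^[n] B :=
    hAct.isActionOn.iterate uniqueDiffOn_disk f.mapsTo f.differentiableOn n
  have hfn : ContDiffOn ℝ 1 f.toFun^[n] Disk := f.contDiffOn.iterate f.mapsTo n
  have hosc : ∀ z ∈ Disk, ∀ w ∈ Disk, |B z - B w| ≤ 4 * ε / π := fun z hz w hw =>
    hB.abs_sub_le_of_near_id (f.mapsTo.iterate n)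
      (fun x hx => norm_sub_le_d1 hfn.continuousOn hx)
      (fun x hx => norm_fderivWithin_sub_id_le_d1 hfn hx) hz hw
  have hBμ : ∫ z, B z ∂μ = 0 := by
    rw [hμ.integral_birkhoffSum hAct.1.continuousOn, hμA, smul_zero]
  have : IsProbabilityMeasure μ := hμ.1
  have hBbound : ∀ z ∈ Disk, ‖B z‖ ≤ 4 * ε / π := fun z hz =>
    abs_le_of_integral_eq_zero hμ.ae_mem_disk (hμ.integrable_of_continuousOn hB.continuousOn)
      hBμ hosc hz
  calc (n : ℝ) * |∫ z in Disk, A z| = ‖∫ z in Disk, B z‖ := by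
        rw [f.setIntegral_birkhoffSum hAct.1.continuousOn, nsmul_eq_mul, Real.norm_eq_abs,
          abs_mul, Nat.abs_cast]
    _ ≤ 4 * ε / π * volume.real Disk :=
        norm_setIntegral_le_of_norm_le_const isCompact_disk.measure_lt_top hBbound
    _ = _ := by ring

/-- If some sequence of iterates of `f` converges to the identity in the
`C¹` topology, then `Cal₁(f) = 0`. -/
theorem cal_C1_rigidity (f : SympDiff) (q : ℕ → ℕ) (hq : ∀ k, 0 < q k)
    (hconv : Filter.Tendsto
      (fun k => d1 (f.toFun^[q k]) (f.invFun^[q k]) id id) Filter.atTop (nhds 0))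
    (A : ℂ → ℝ) (hA : IsNormalizedAction f A) :
    (1 / Real.pi) * ∫ z in Disk, A z = 0 := by
  have hbound : ∀ k, |∫ z in Disk, A z| ≤
      4 * volume.real Disk / π * d1 (f.toFun^[q k]) (f.invFun^[q k]) id id := fun k =>
    (le_mul_of_one_le_left (abs_nonneg _) (by exact_mod_cast hq k)).trans
      (hA.natCast_mul_abs_setIntegral_le (q k))
  have hlim : Tendsto (fun k => 4 * volume.real Disk / π *
      d1 (f.toFun^[q k]) (f.invFun^[q k]) id id) atTop (𝓝 0) := by
    simpa using hconv.const_mul (4 * volume.real Disk / π)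
  have hzero : |∫ z in Disk, A z| ≤ 0 := ge_of_tendsto' hlim hbound
  rw [abs_nonpos_iff.1 hzero, mul_zero]
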